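/- No exchangeable strong separability (Theorem 3.22 of the paper): Let D_1 : Ω → Z^{n+1} and D_2 : Ω → Z^{m+1} be random variables on a common probability space (Ω,P) that are independent as two sequence-valued random variables and each individually exchangeable. Then for every ε, γ ∈ (0,1), P( {D_1 ∈ Γ^ε_{n,A}} ∩ {D_2 ∈ Γ^γ_{m,A}} ) = P(D_1 ∈ Γ^ε_{n,A}) · P(D_2 ∈ Γ^γ_{m,A}) ≥ (1−ε)(1−γ). Consequently D_1 and D_2 cannot be A-conformally (ε,γ,δ)-separable for any δ < (1−ε)(1−γ). -/
import Mathlib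


open MeasureTheory

/-- A nonconformity score on sequences of length `n+1`: measurable (jointly) and invariant
under permutations of the `n+1` coordinates of its first argument. -/
def IsNonconfScore {Z : Type*} [MeasurableSpace Z] {n : ℕ}
    (A : (Fin (n + 1) → Z) → Z → ℝ) : Prop :=
  Measurable (fun p : (Fin (n + 1) → Z) × Z => A p.1 p.2) ∧
    ∀ (σ : Equiv.Perm (Fin (n + 1))) (b : Fin (n + 1) → Z) (z : Z), A (b ∘ σ) z = A b z

/-- The conformal p-value `p_{n,A}(D, z)`. -/
noncomputable def pval {Z : Type*} [MeasurableSpace Z] {n : ℕ}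
    (A : (Fin (n + 1) → Z) → Z → ℝ) (D : Fin n → Z) (z : Z) : ℝ :=
  (Finset.univ.filter (fun i : Fin (n + 1) =>
      A (Fin.snoc D z) ((Fin.snoc D z : Fin (n + 1) → Z) i) ≥ A (Fin.snoc D z) z)).card / (n + 1)

/-- A `Z^m`-valued random variable is exchangeable if permuting its coordinates does not
change its distribution. -/
def Exchangeable {Ω Z : Type*} [MeasurableSpace Ω] [MeasurableSpace Z]
    (μ : Measure Ω) {m : ℕ} (Zs : Ω → Fin m → Z) : Prop :=
  ∀ σ : Equiv.Perm (Fin m),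
    Measure.map (fun ω => (Zs ω) ∘ σ) μ = Measure.map Zs μ

/-- `D₁, D₂` are `A`-conformally `(ε,γ,δ)`-separable: the probability that the last
coordinate of each is conformal (at levels `ε`, `γ` resp.) is below `δ`. -/
def ConfSeparable {Ω Z : Type*} [MeasurableSpace Ω] [MeasurableSpace Z]
    (μ : Measure Ω) {n m : ℕ}
    (An : (Fin (n + 1) → Z) → Z → ℝ) (Am : (Fin (m + 1) → Z) → Z → ℝ)
    (D₁ : Ω → Fin (n + 1) → Z) (D₂ : Ω → Fin (m + 1) → Z) (ε γ δ : ℝ) : Prop :=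
  μ ({ω | pval An (Fin.init (D₁ ω)) (D₁ ω (Fin.last n)) > ε} ∩
      {ω | pval Am (Fin.init (D₂ ω)) (D₂ ω (Fin.last m)) > γ}) < ENNReal.ofReal δ


open scoped ENNReal

/-- The rank count: number of indices whose score is at least that of index `j`. -/
noncomputable def confCount {Z : Type*} [MeasurableSpace Z] {n : ℕ}
    (A : (Fin (n + 1) → Z) → Z → ℝ) (j : Fin (n + 1))
    (b : Fin (n + 1) → Z) : ℕ :=
  (Finset.univ.filter (fun i => A b (b i) ≥ A b (b j))).card

lemma card_small_rank_le {N : ℕ} (s : Fin N → ℝ) (k : ℕ) :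
    (Finset.univ.filter fun j => (Finset.univ.filter fun i => s i ≥ s j).card ≤ k).card ≤ k := by
  set J := Finset.univ.filter fun j => (Finset.univ.filter fun i => s i ≥ s j).card ≤ k with hJ
  rcases J.eq_empty_or_nonempty with h | h
  · simp [h]
  · obtain ⟨j₀, hj₀, hmin⟩ := J.exists_min_image s h
    have hsub : J ⊆ Finset.univ.filter fun i => s i ≥ s j₀ := by
      intro j hj
      simp only [Finset.mem_filter, Finset.mem_univ, true_and]
      exact hmin j hj
    calc J.card ≤ (Finset.univ.filter fun i => s i ≥ s j₀).card := Finset.card_le_card hsub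
      _ ≤ k := (Finset.mem_filter.mp hj₀).2

lemma measurable_confCount {Z : Type*} [MeasurableSpace Z] {n : ℕ}
    {A : (Fin (n + 1) → Z) → Z → ℝ}
    (hA : Measurable (fun p : (Fin (n + 1) → Z) × Z => A p.1 p.2)) (j : Fin (n + 1)) :
    Measurable (confCount A j) := by
  have hco : ∀ i : Fin (n+1), Measurable (fun b : Fin (n+1) → Z => A b (b i)) := fun i =>
    hA.comp (measurable_id.prodMk (measurable_pi_apply i))
  have : confCount A j = fun b => ∑ i : Fin (n+1), if A b (b i) ≥ A b (b j) then 1 else 0 := by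
    funext b; unfold confCount; rw [Finset.card_filter]
  rw [this]
  exact Finset.measurable_sum _ fun i _ =>
    Measurable.ite (measurableSet_le (hco j) (hco i)) measurable_const measurable_const

lemma confCount_comp_perm {Z : Type*} [MeasurableSpace Z] {n : ℕ}
    {A : (Fin (n + 1) → Z) → Z → ℝ}
    (hA2 : ∀ (σ : Equiv.Perm (Fin (n + 1))) (b : Fin (n + 1) → Z) (z : Z), A (b ∘ σ) z = A b z)
    (σ : Equiv.Perm (Fin (n + 1))) (j : Fin (n + 1)) (b : Fin (n + 1) → Z) :
    confCount A j (b ∘ σ) = confCount A (σ j) b := by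
  unfold confCount
  simp only [Function.comp_apply, hA2 σ b]
  apply Finset.card_bij (fun i _ => σ i)
  · intro a ha
    simp only [Finset.mem_filter, Finset.mem_univ, true_and] at ha ⊢
    exact ha
  · intro a _ c _ h; exact σ.injective h
  · intro c hc
    refine ⟨σ.symm c, ?_, by simp⟩
    simp only [Finset.mem_filter, Finset.mem_univ, true_and] at hc ⊢
    simpa using hc

lemma pval_gt_iff {Z : Type*} [MeasurableSpace Z] {n : ℕ}
    {A : (Fin (n + 1) → Z) → Z → ℝ} {ε : ℝ}
    (b : Fin (n + 1) → Z) :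
    pval A (Fin.init b) (b (Fin.last n)) > ε ↔
      ε * (n + 1) < confCount A (Fin.last n) b := by
  have hb : (Fin.snoc (Fin.init b) (b (Fin.last n)) : Fin (n+1) → Z) = b := Fin.snoc_init_self b
  have hpos : (0:ℝ) < (n:ℝ) + 1 := by positivity
  rw [pval, hb]
  rw [gt_iff_lt, lt_div_iff₀ hpos]
  rfl

lemma conformal_validity {Ω Z : Type*} [MeasurableSpace Ω] [MeasurableSpace Z] {n : ℕ}
    (μ : Measure Ω) [IsProbabilityMeasure μ]
    {A : (Fin (n + 1) → Z) → Z → ℝ} (hA : Measurable (fun p : (Fin (n + 1) → Z) × Z => A p.1 p.2))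
    (hA2 : ∀ (σ : Equiv.Perm (Fin (n + 1))) (b : Fin (n + 1) → Z) (z : Z), A (b ∘ σ) z = A b z)
    {D : Ω → Fin (n + 1) → Z} (hD : Measurable D) (hexch : Exchangeable μ D)
    {ε : ℝ} (hε : ε ∈ Set.Ioo (0 : ℝ) 1) :
    ENNReal.ofReal (1 - ε) ≤
      μ (D ⁻¹' {b | ε * (n + 1) < confCount A (Fin.last n) b}) := by
  set k : ℕ := ⌊ε * (n + 1)⌋₊ with hk
  have hεn : (0:ℝ) ≤ ε * (n + 1) := by
    have := hε.1.le
    positivity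
  set S : Set (Fin (n+1) → Z) := {b | confCount A (Fin.last n) b ≤ k} with hS
  have hmeasS : ∀ j : Fin (n+1), MeasurableSet {b : Fin (n+1) → Z | confCount A j b ≤ k} := by
    intro j
    exact (measurable_confCount hA j) measurableSet_Iic
  have hsame : ∀ j : Fin (n+1),
      μ (D ⁻¹' {b | confCount A j b ≤ k}) = μ (D ⁻¹' S) := by
    intro j
    set σ : Equiv.Perm (Fin (n+1)) := Equiv.swap (Fin.last n) j with hσ
    have hσlast : σ (Fin.last n) = j := Equiv.swap_apply_left _ _
    have hDσ : Measurable (fun ω => D ω ∘ σ) := by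
      rw [measurable_pi_iff]; intro i; exact (measurable_pi_apply (σ i)).comp hD
    have hset : (fun ω => D ω ∘ σ) ⁻¹' S = D ⁻¹' {b | confCount A j b ≤ k} := by
      ext ω
      simp only [Set.mem_preimage, hS, Set.mem_setOf_eq, confCount_comp_perm hA2 σ, hσlast]
    calc μ (D ⁻¹' {b | confCount A j b ≤ k}) = μ ((fun ω => D ω ∘ σ) ⁻¹' S) := by rw [hset]
      _ = (Measure.map (fun ω => D ω ∘ σ) μ) S := (Measure.map_apply hDσ (hmeasS _)).symm
      _ = (Measure.map D μ) S := by rw [hexch σ]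
      _ = μ (D ⁻¹' S) := Measure.map_apply hD (hmeasS _)
  have hsum : ∑ j : Fin (n+1), μ (D ⁻¹' {b | confCount A j b ≤ k}) ≤ (k : ℝ≥0∞) := by
    have h1 : ∀ j : Fin (n+1), μ (D ⁻¹' {b | confCount A j b ≤ k}) =
        ∫⁻ ω, (D ⁻¹' {b | confCount A j b ≤ k}).indicator (fun _ => (1:ℝ≥0∞)) ω ∂μ := by
      intro j
      exact (lintegral_indicator_one (hD (hmeasS j))).symm
    calc ∑ j : Fin (n+1), μ (D ⁻¹' {b | confCount A j b ≤ k})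
        = ∫⁻ ω, ∑ j : Fin (n+1),
            (D ⁻¹' {b | confCount A j b ≤ k}).indicator (fun _ => (1:ℝ≥0∞)) ω ∂μ := by
          rw [lintegral_finset_sum]
          · exact Finset.sum_congr rfl fun j _ => h1 j
          · intro j _
            exact (measurable_const.indicator (hD (hmeasS j)))
      _ ≤ ∫⁻ _, (k : ℝ≥0∞) ∂μ := by
          apply lintegral_mono
          intro ω
          have hcard := card_small_rank_le (fun i => A (D ω) (D ω i)) k
          calc ∑ j : Fin (n+1),
              (D ⁻¹' {b | confCount A j b ≤ k}).indicator (fun _ => (1:ℝ≥0∞)) ω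
              = ∑ j : Fin (n+1), if confCount A j (D ω) ≤ k then (1:ℝ≥0∞) else 0 := by
                refine Finset.sum_congr rfl fun j _ => ?_
                by_cases h : confCount A j (D ω) ≤ k <;>
                  simp [Set.indicator, h]
            _ = ((Finset.univ.filter fun j => confCount A j (D ω) ≤ k).card : ℝ≥0∞) := by
                rw [Finset.card_filter]; push_cast; rfl
            _ ≤ (k : ℝ≥0∞) := by
                exact_mod_cast hcard
      _ = (k : ℝ≥0∞) := by simp
  have hmul : ((n:ℝ≥0∞) + 1) * μ (D ⁻¹' S) ≤ (k : ℝ≥0∞) := by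
    calc ((n:ℝ≥0∞) + 1) * μ (D ⁻¹' S)
        = ∑ _j : Fin (n+1), μ (D ⁻¹' S) := by
          rw [Finset.sum_const, Finset.card_univ, Fintype.card_fin, nsmul_eq_mul]; push_cast; ring
      _ = ∑ j : Fin (n+1), μ (D ⁻¹' {b | confCount A j b ≤ k}) :=
          (Finset.sum_congr rfl fun j _ => (hsame j).symm)
      _ ≤ (k : ℝ≥0∞) := hsum
  have hk_le : (k : ℝ≥0∞) ≤ ((n:ℝ≥0∞) + 1) * ENNReal.ofReal ε := by
    have h1 : (k : ℝ) ≤ ε * (n + 1) := Nat.floor_le hεn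
    calc (k : ℝ≥0∞) = ENNReal.ofReal (k : ℝ) := by simp
      _ ≤ ENNReal.ofReal (ε * (n + 1)) := ENNReal.ofReal_le_ofReal h1
      _ = ENNReal.ofReal ε * ENNReal.ofReal ((n:ℝ) + 1) := ENNReal.ofReal_mul hε.1.le
      _ = ((n:ℝ≥0∞) + 1) * ENNReal.ofReal ε := by
          rw [mul_comm]
          congr 1
          rw [ENNReal.ofReal_add (by positivity) zero_le_one]
          simp
  have hSle : μ (D ⁻¹' S) ≤ ENNReal.ofReal ε := by
    have hne : ((n:ℝ≥0∞) + 1) ≠ 0 := by simp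
    have hnt : ((n:ℝ≥0∞) + 1) ≠ ⊤ := by
      simp [ENNReal.add_eq_top]
    exact (ENNReal.mul_le_mul_iff_right hne hnt).mp (hmul.trans hk_le)
  have hcompl : D ⁻¹' {b | ε * (n + 1) < confCount A (Fin.last n) b} = (D ⁻¹' S)ᶜ := by
    ext ω
    simp only [Set.mem_preimage, Set.mem_setOf_eq, Set.mem_compl_iff, hS, not_le]
    exact (Nat.floor_lt hεn).symm
  rw [hcompl, prob_compl_eq_one_sub (hD (hmeasS _))]
  have hofReal : ENNReal.ofReal (1 - ε) = 1 - ENNReal.ofReal ε := by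
    rw [ENNReal.ofReal_sub _ hε.1.le, ENNReal.ofReal_one]
  rw [hofReal]
  exact tsub_le_tsub_left hSle 1

/-- No exchangeable strong separability: if `D₁ : Ω → Z^{n+1}` and `D₂ : Ω → Z^{m+1}` are
independent as sequence-valued random variables and each individually exchangeable, then for
all `ε, γ ∈ (0,1)` the joint conformal probability factors and is at least `(1-ε)(1-γ)`;
consequently `D₁, D₂` cannot be `A`-conformally `(ε,γ,δ)`-separable for any
`δ < (1-ε)(1-γ)`. -/
theorem no_exchangeable_strong_separability {Ω Z : Type*} [MeasurableSpace Ω]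
    [MeasurableSpace Z] (μ : Measure Ω) [IsProbabilityMeasure μ] {n m : ℕ}
    (An : (Fin (n + 1) → Z) → Z → ℝ) (Am : (Fin (m + 1) → Z) → Z → ℝ)
    (hAn : IsNonconfScore An) (hAm : IsNonconfScore Am)
    (D₁ : Ω → Fin (n + 1) → Z) (D₂ : Ω → Fin (m + 1) → Z)
    (hD₁ : Measurable D₁) (hD₂ : Measurable D₂)
    (hind : ProbabilityTheory.IndepFun D₁ D₂ μ)
    (hexch₁ : Exchangeable μ D₁) (hexch₂ : Exchangeable μ D₂)
    (ε γ : ℝ) (hε : ε ∈ Set.Ioo (0 : ℝ) 1) (hγ : γ ∈ Set.Ioo (0 : ℝ) 1) :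
    (μ ({ω | pval An (Fin.init (D₁ ω)) (D₁ ω (Fin.last n)) > ε} ∩
          {ω | pval Am (Fin.init (D₂ ω)) (D₂ ω (Fin.last m)) > γ}) =
        μ {ω | pval An (Fin.init (D₁ ω)) (D₁ ω (Fin.last n)) > ε} *
          μ {ω | pval Am (Fin.init (D₂ ω)) (D₂ ω (Fin.last m)) > γ}) ∧
      (ENNReal.ofReal ((1 - ε) * (1 - γ)) ≤
        μ ({ω | pval An (Fin.init (D₁ ω)) (D₁ ω (Fin.last n)) > ε} ∩
            {ω | pval Am (Fin.init (D₂ ω)) (D₂ ω (Fin.last m)) > γ})) ∧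
      ∀ δ : ℝ, δ < (1 - ε) * (1 - γ) → ¬ ConfSeparable μ An Am D₁ D₂ ε γ δ := by
    -- rewrite the events as preimages of measurable sets
  have hset₁ : {ω | pval An (Fin.init (D₁ ω)) (D₁ ω (Fin.last n)) > ε} =
      D₁ ⁻¹' {b | ε * (n + 1) < confCount An (Fin.last n) b} := by
    ext ω; exact pval_gt_iff (D₁ ω)
  have hset₂ : {ω | pval Am (Fin.init (D₂ ω)) (D₂ ω (Fin.last m)) > γ} =
      D₂ ⁻¹' {b | γ * (m + 1) < confCount Am (Fin.last m) b} := by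
    ext ω; exact pval_gt_iff (D₂ ω)
  have hms₁ : MeasurableSet {b : Fin (n+1) → Z | ε * (n + 1) < confCount An (Fin.last n) b} := by
    have : {b : Fin (n+1) → Z | ε * (n + 1) < confCount An (Fin.last n) b} =
        (confCount An (Fin.last n)) ⁻¹' {c : ℕ | ε * (n + 1) < (c : ℝ)} := rfl
    rw [this]
    exact (measurable_confCount hAn.1 _) (MeasurableSet.of_discrete)
  have hms₂ : MeasurableSet {b : Fin (m+1) → Z | γ * (m + 1) < confCount Am (Fin.last m) b} := by
    have : {b : Fin (m+1) → Z | γ * (m + 1) < confCount Am (Fin.last m) b} =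
        (confCount Am (Fin.last m)) ⁻¹' {c : ℕ | γ * (m + 1) < (c : ℝ)} := rfl
    rw [this]
    exact (measurable_confCount hAm.1 _) (MeasurableSet.of_discrete)
  have hfact : μ ({ω | pval An (Fin.init (D₁ ω)) (D₁ ω (Fin.last n)) > ε} ∩
          {ω | pval Am (Fin.init (D₂ ω)) (D₂ ω (Fin.last m)) > γ}) =
        μ {ω | pval An (Fin.init (D₁ ω)) (D₁ ω (Fin.last n)) > ε} *
          μ {ω | pval Am (Fin.init (D₂ ω)) (D₂ ω (Fin.last m)) > γ} := by
    rw [hset₁, hset₂]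
    exact hind.measure_inter_preimage_eq_mul _ _ hms₁ hms₂
  have hval₁ := conformal_validity μ hAn.1 hAn.2 hD₁ hexch₁ hε
  have hval₂ := conformal_validity μ hAm.1 hAm.2 hD₂ hexch₂ hγ
  have hlow : ENNReal.ofReal ((1 - ε) * (1 - γ)) ≤
      μ ({ω | pval An (Fin.init (D₁ ω)) (D₁ ω (Fin.last n)) > ε} ∩
          {ω | pval Am (Fin.init (D₂ ω)) (D₂ ω (Fin.last m)) > γ}) := by
    rw [hfact, hset₁, hset₂]
    calc ENNReal.ofReal ((1 - ε) * (1 - γ))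
        = ENNReal.ofReal (1 - ε) * ENNReal.ofReal (1 - γ) :=
          ENNReal.ofReal_mul (by linarith [hε.2])
      _ ≤ _ := mul_le_mul' hval₁ hval₂
  refine ⟨hfact, hlow, fun δ hδ hsep => ?_⟩
  unfold ConfSeparable at hsep
  have : ENNReal.ofReal δ ≤ ENNReal.ofReal ((1 - ε) * (1 - γ)) :=
    ENNReal.ofReal_le_ofReal hδ.le
  exact absurd (lt_of_lt_of_le hsep (this.trans hlow)) (lt_irrefl _)
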